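/- arXiv:2507.02638 — 7 statements merged into one kernel-verified Lean document; each statement's English description precedes it below -/
import Mathlib

section
/- Let A, B ⊂ R^d with |A ∩ B| > 0 and |B \ A| < ∞. Define the extension operator Φ : L^p(A ∩ B) → L^p(B) by Φ(u)(x) = u(x) for x ∈ A ∩ B and Φ(u)(x) = u_{A∩B} (the mean of u over A ∩ B) for x ∈ B \ A. Then Φ is linear, Φ(u) = u on A ∩ B, ∫_B |Φ(u)|^p ≤ (1 + |B \ A|/|A ∩ B|) ∫_{A∩B} |u|^p, and ∫_{B×B} |Φ(u)(x) − Φ(u)(y)|^p dx dy ≤ (1 + 2|B \ A|/|A ∩ B|) ∫_{(A∩B)×(A∩B)} |u(x) − u(y)|^p dx dy. -/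
open MeasureTheory ENNReal Classical

open scoped Classical

/-!
On `B \ A` the extension is the constant `c = ⨍_{A ∩ B} u`, and Jensen's inequality for the
convex function `|t - ·|^p` gives `|t - c|^p ≤ ⨍_{A ∩ B} |t - u|^p` for every `t`. Integrating this
over `B \ A` bounds the new part of the `L^p` norm by `|B \ A| / |A ∩ B|` times the old one. In the
double integral the pairs in `(B \ A) × (B \ A)` contribute nothing, and each of the two mixed
regions `(A ∩ B) × (B \ A)` and `(B \ A) × (A ∩ B)` contributes at most `|B \ A| / |A ∩ B|` times
the double integral over `(A ∩ B) × (A ∩ B)`.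
-/

theorem ENNReal.ofReal_one_add_toReal_div {a b : ℝ≥0∞} (ha : a ≠ ∞) (hb : b ≠ 0) :
    ENNReal.ofReal (1 + a.toReal / b.toReal) = 1 + a / b := by
  rw [← ENNReal.toReal_div, ENNReal.ofReal_add zero_le_one toReal_nonneg, ENNReal.ofReal_one,
    ENNReal.ofReal_toReal (ENNReal.div_ne_top ha hb)]

namespace MeasureTheory

variable {X : Type*} [MeasurableSpace X] {μ : Measure X} {S D : Set X} {p : ℝ}

theorem ofReal_abs_setAverage_rpow_le_setLAverage (hS₀ : μ S ≠ 0) (hS : μ S ≠ ∞) (hp : 1 ≤ p)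
    {f : X → ℝ} (hf : MemLp f (ENNReal.ofReal p) (μ.restrict S)) :
    ENNReal.ofReal (|⨍ x in S, f x ∂μ| ^ p) ≤ ⨍⁻ x in S, ENNReal.ofReal (|f x| ^ p) ∂μ := by
  have : IsFiniteMeasure (μ.restrict S) := isFiniteMeasure_restrict.2 hS
  have : NeZero (μ.restrict S) := ⟨by simpa using hS₀⟩
  have hp₀ : 0 ≤ p := zero_le_one.trans hp
  have hfi : Integrable f (μ.restrict S) := hf.integrable (ENNReal.one_le_ofReal.2 hp)
  have hfpi : Integrable (fun x => |f x| ^ p) (μ.restrict S) := by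
    simpa [Real.norm_eq_abs, ENNReal.toReal_ofReal hp₀] using hf.integrable_norm_rpow'
  have habs : |⨍ x in S, f x ∂μ| ≤ ⨍ x in S, |f x| ∂μ :=
    (convexOn_norm convex_univ).map_average_le continuous_norm.continuousOn isClosed_univ
      (ae_of_all _ fun _ => trivial) hfi hfi.norm
  have hjensen : (⨍ x in S, |f x| ∂μ) ^ p ≤ ⨍ x in S, |f x| ^ p ∂μ :=
    (convexOn_rpow hp).map_average_le (continuousOn_id.rpow_const fun _ _ => Or.inr hp₀)
      isClosed_Ici (ae_of_all _ fun x => abs_nonneg (f x)) hfi.abs hfpi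
  calc ENNReal.ofReal (|⨍ x in S, f x ∂μ| ^ p)
      ≤ ENNReal.ofReal (⨍ x in S, |f x| ^ p ∂μ) :=
        ENNReal.ofReal_le_ofReal ((Real.rpow_le_rpow (abs_nonneg _) habs hp₀).trans hjensen)
    _ = ⨍⁻ x in S, ENNReal.ofReal (|f x| ^ p) ∂μ := by
        rw [setAverage_eq, setLAverage_eq, smul_eq_mul, measureReal_def,
          ← ofReal_integral_eq_lintegral_ofReal hfpi (ae_of_all _ fun x => by positivity),
          ENNReal.ofReal_mul (by positivity), ENNReal.ofReal_inv_of_pos, ENNReal.ofReal_toReal hS,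
          ENNReal.div_eq_inv_mul]
        exact ENNReal.toReal_pos hS₀ hS

theorem ofReal_abs_sub_setAverage_rpow_le (hS₀ : μ S ≠ 0) (hS : μ S ≠ ∞) (hp : 1 ≤ p)
    {u : X → ℝ} (hu : MemLp u (ENNReal.ofReal p) (μ.restrict S)) (t : ℝ) :
    ENNReal.ofReal (|t - ⨍ y in S, u y ∂μ| ^ p)
      ≤ (∫⁻ y in S, ENNReal.ofReal (|t - u y| ^ p) ∂μ) / μ S := by
  have : IsFiniteMeasure (μ.restrict S) := isFiniteMeasure_restrict.2 hS
  have hui : Integrable u (μ.restrict S) := hu.integrable (ENNReal.one_le_ofReal.2 hp)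
  have hmean : ⨍ y in S, (t - u y) ∂μ = t - ⨍ y in S, u y ∂μ := by
    rw [average_eq, average_eq, integral_sub (integrable_const t) hui, integral_const, smul_sub,
      smul_smul, inv_mul_cancel₀, one_smul]
    simpa [measureReal_def] using ENNReal.toReal_ne_zero.2 ⟨hS₀, hS⟩
  rw [← hmean, ← setLAverage_eq]
  exact ofReal_abs_setAverage_rpow_le_setLAverage hS₀ hS hp ((memLp_const t).sub hu)

noncomputable def extendByAverage (μ : Measure X) (S : Set X) (u : X → ℝ) : X → ℝ :=
  fun x => if x ∈ S then u x else ⨍ y in S, u y ∂μ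

theorem extendByAverage_of_mem {u : X → ℝ} {x : X} (hx : x ∈ S) :
    extendByAverage μ S u x = u x :=
  if_pos hx

theorem extendByAverage_of_notMem {u : X → ℝ} {x : X} (hx : x ∉ S) :
    extendByAverage μ S u x = ⨍ y in S, u y ∂μ :=
  if_neg hx

theorem extendByAverage_const_mul_add {u v : X → ℝ} (hu : IntegrableOn u S μ)
    (hv : IntegrableOn v S μ) (c : ℝ) :
    extendByAverage μ S (fun x => c * u x + v x)
      = fun x => c * extendByAverage μ S u x + extendByAverage μ S v x := by
  funext x
  by_cases hx : x ∈ S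
  · simp only [extendByAverage_of_mem hx]
  · simp only [extendByAverage_of_notMem hx, setAverage_eq, integral_add (hu.const_mul c) hv,
      integral_const_mul, smul_eq_mul]
    ring

theorem setLIntegral_union_comp_extendByAverage (hS : MeasurableSet S) (hD : MeasurableSet D)
    (hSD : Disjoint S D) (F : ℝ → ℝ≥0∞) (u : X → ℝ) :
    ∫⁻ x in S ∪ D, F (extendByAverage μ S u x) ∂μ
      = ∫⁻ x in S, F (u x) ∂μ + F (⨍ y in S, u y ∂μ) * μ D := by
  rw [lintegral_union hD hSD,
    setLIntegral_congr_fun hS fun x hx => by rw [extendByAverage_of_mem hx],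
    setLIntegral_congr_fun hD fun x hx => by
      rw [extendByAverage_of_notMem (hSD.notMem_of_mem_right hx)],
    setLIntegral_const]

theorem setLIntegral_union_extendByAverage_rpow_le (hS : MeasurableSet S) (hD : MeasurableSet D)
    (hSD : Disjoint S D) (hS₀ : μ S ≠ 0) (hS_fin : μ S ≠ ∞) (hp : 1 ≤ p) {u : X → ℝ}
    (hu : MemLp u (ENNReal.ofReal p) (μ.restrict S)) :
    ∫⁻ x in S ∪ D, ENNReal.ofReal (|extendByAverage μ S u x| ^ p) ∂μ
      ≤ (1 + μ D / μ S) * ∫⁻ x in S, ENNReal.ofReal (|u x| ^ p) ∂μ := by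
  set I := ∫⁻ x in S, ENNReal.ofReal (|u x| ^ p) ∂μ
  have hmean : ENNReal.ofReal (|⨍ y in S, u y ∂μ| ^ p) ≤ I / μ S :=
    (ofReal_abs_setAverage_rpow_le_setLAverage hS₀ hS_fin hp hu).trans_eq (setLAverage_eq _ _ _)
  calc ∫⁻ x in S ∪ D, ENNReal.ofReal (|extendByAverage μ S u x| ^ p) ∂μ
      = I + ENNReal.ofReal (|⨍ y in S, u y ∂μ| ^ p) * μ D :=
        setLIntegral_union_comp_extendByAverage hS hD hSD (fun t => ENNReal.ofReal (|t| ^ p)) u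
    _ ≤ I + I / μ S * μ D := by gcongr
    _ = (1 + μ D / μ S) * I := by simp only [div_eq_mul_inv]; ring

theorem setLIntegral_union_setLIntegral_union_extendByAverage_sub_rpow_le (hS : MeasurableSet S)
    (hD : MeasurableSet D) (hSD : Disjoint S D) (hS₀ : μ S ≠ 0) (hS_fin : μ S ≠ ∞)
    (hD_fin : μ D ≠ ∞) (hp : 1 ≤ p) {u : X → ℝ} (hu : MemLp u (ENNReal.ofReal p) (μ.restrict S)) :
    ∫⁻ x in S ∪ D, ∫⁻ y in S ∪ D,
        ENNReal.ofReal (|extendByAverage μ S u x - extendByAverage μ S u y| ^ p) ∂μ ∂μ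
      ≤ (1 + 2 * μ D / μ S) * ∫⁻ x in S, ∫⁻ y in S, ENNReal.ofReal (|u x - u y| ^ p) ∂μ ∂μ := by
  set c := ⨍ y in S, u y ∂μ
  set G : ℝ → ℝ≥0∞ := fun t => ∫⁻ y in S, ENNReal.ofReal (|t - u y| ^ p) ∂μ
  set J := ∫⁻ x in S, G (u x) ∂μ
  have hG (t : ℝ) : ENNReal.ofReal (|t - c| ^ p) ≤ G t / μ S :=
    ofReal_abs_sub_setAverage_rpow_le hS₀ hS_fin hp hu t
  have hinner (t : ℝ) :
      ∫⁻ y in S ∪ D, ENNReal.ofReal (|t - extendByAverage μ S u y| ^ p) ∂μ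
        = G t + ENNReal.ofReal (|t - c| ^ p) * μ D :=
    setLIntegral_union_comp_extendByAverage hS hD hSD (fun s => ENNReal.ofReal (|t - s| ^ p)) u
  have hGc : G c ≤ J / μ S := by
    calc G c = ∫⁻ y in S, ENNReal.ofReal (|u y - c| ^ p) ∂μ := by simp_rw [G, abs_sub_comm]
      _ ≤ ∫⁻ y in S, G (u y) * (μ S)⁻¹ ∂μ := lintegral_mono fun y => hG (u y)
      _ = J / μ S := lintegral_mul_const' _ _ (ENNReal.inv_ne_top.2 hS₀)
  have hD_div : 1 + μ D / μ S ≠ ∞ :=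
    ENNReal.add_ne_top.2 ⟨one_ne_top, ENNReal.div_ne_top hD_fin hS₀⟩
  calc ∫⁻ x in S ∪ D, ∫⁻ y in S ∪ D,
        ENNReal.ofReal (|extendByAverage μ S u x - extendByAverage μ S u y| ^ p) ∂μ ∂μ
      = ∫⁻ x in S, (G (u x) + ENNReal.ofReal (|u x - c| ^ p) * μ D) ∂μ
          + (G c + ENNReal.ofReal (|c - c| ^ p) * μ D) * μ D := by
        simp_rw [hinner]
        exact setLIntegral_union_comp_extendByAverage hS hD hSD
          (fun t => G t + ENNReal.ofReal (|t - c| ^ p) * μ D) u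
    _ ≤ ∫⁻ x in S, G (u x) * (1 + μ D / μ S) ∂μ + J / μ S * μ D := by
        rw [sub_self, abs_zero, Real.zero_rpow (by linarith), ENNReal.ofReal_zero, zero_mul,
          add_zero]
        gcongr with x
        calc G (u x) + ENNReal.ofReal (|u x - c| ^ p) * μ D
            ≤ G (u x) + G (u x) / μ S * μ D := by gcongr; exact hG (u x)
          _ = G (u x) * (1 + μ D / μ S) := by simp only [div_eq_mul_inv]; ring
    _ = (1 + 2 * μ D / μ S) * J := by
        rw [lintegral_mul_const' _ _ hD_div]
        simp only [div_eq_mul_inv]; ring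

end MeasureTheory

/-- piecewise-average extension operator from `A ∩ B` to `B`. -/
theorem stmt_2 {d : ℕ} (A B : Set (EuclideanSpace ℝ (Fin d)))
    (hAm : MeasurableSet A) (hBm : MeasurableSet B)
    (h0 : 0 < volume (A ∩ B)) (hfin : volume (A ∩ B) < ⊤)
    (hdiff : volume (B \ A) < ⊤)
    (p : ℝ) (hp : 1 ≤ p) :
    let Φ : (EuclideanSpace ℝ (Fin d) → ℝ) → EuclideanSpace ℝ (Fin d) → ℝ :=
      fun v x => if x ∈ A ∩ B then v x
        else ((volume (A ∩ B)).toReal)⁻¹ * ∫ y in A ∩ B, v y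
    (∀ u v : EuclideanSpace ℝ (Fin d) → ℝ,
        MemLp u (ENNReal.ofReal p) (volume.restrict (A ∩ B)) →
        MemLp v (ENNReal.ofReal p) (volume.restrict (A ∩ B)) →
        ∀ c : ℝ, Φ (fun x => c * u x + v x) = fun x => c * Φ u x + Φ v x) ∧
    ∀ u : EuclideanSpace ℝ (Fin d) → ℝ,
      MemLp u (ENNReal.ofReal p) (volume.restrict (A ∩ B)) →
      (∀ x ∈ A ∩ B, Φ u x = u x) ∧
      (∫⁻ x in B, ENNReal.ofReal (|Φ u x| ^ p)
        ≤ ENNReal.ofReal (1 + (volume (B \ A)).toReal / (volume (A ∩ B)).toReal) *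
          ∫⁻ x in A ∩ B, ENNReal.ofReal (|u x| ^ p)) ∧
      (∫⁻ x in B, ∫⁻ y in B, ENNReal.ofReal (|Φ u x - Φ u y| ^ p)
        ≤ ENNReal.ofReal (1 + 2 * (volume (B \ A)).toReal / (volume (A ∩ B)).toReal) *
          ∫⁻ x in A ∩ B, ∫⁻ y in A ∩ B, ENNReal.ofReal (|u x - u y| ^ p)) := by
  intro Φ
  have hΦ : Φ = extendByAverage volume (A ∩ B) := by
    funext v x
    by_cases hx : x ∈ A ∩ B
    · simp only [Φ, if_pos hx, extendByAverage_of_mem hx]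
    · simp only [Φ, if_neg hx, extendByAverage_of_notMem hx, setAverage_eq, measureReal_def,
        smul_eq_mul]
  have hB : A ∩ B ∪ B \ A = B := by rw [Set.inter_comm, Set.inter_union_sdiff]
  have hSD : Disjoint (A ∩ B) (B \ A) := Set.disjoint_sdiff_right.mono_left Set.inter_subset_left
  have hS : MeasurableSet (A ∩ B) := hAm.inter hBm
  have hD : MeasurableSet (B \ A) := hBm.diff hAm
  have hint {u : EuclideanSpace ℝ (Fin d) → ℝ}
      (hu : MemLp u (ENNReal.ofReal p) (volume.restrict (A ∩ B))) : IntegrableOn u (A ∩ B) := by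
    have : IsFiniteMeasure (volume.restrict (A ∩ B)) := isFiniteMeasure_restrict.2 hfin.ne
    exact hu.integrable (ENNReal.one_le_ofReal.2 hp)
  refine ⟨fun u v hu hv c => hΦ ▸ extendByAverage_const_mul_add (hint hu) (hint hv) c,
    fun u hu => ⟨fun x hx => hΦ ▸ extendByAverage_of_mem hx, ?_, ?_⟩⟩
  · rw [hΦ, ENNReal.ofReal_one_add_toReal_div hdiff.ne h0.ne']
    simpa only [hB] using setLIntegral_union_extendByAverage_rpow_le hS hD hSD h0.ne' hfin.ne hp hu
  · have h2δ : 2 * (volume (B \ A)).toReal = (2 * volume (B \ A)).toReal := by simp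
    rw [hΦ, h2δ, ENNReal.ofReal_one_add_toReal_div (mul_ne_top ofNat_ne_top hdiff.ne) h0.ne']
    simpa only [hB] using setLIntegral_union_setLIntegral_union_extendByAverage_sub_rpow_le
      hS hD hSD h0.ne' hfin.ne hdiff.ne hp hu
end

section
/- Let M ⊂ R^d be measurable, p ≥ 1, and suppose there exist κ_0 > 0, r_0 > 0 with |M ∩ B_{r_0}(η)|/|B_{r_0}| ≥ κ_0 for all η ∈ M. Suppose η', η'' ∈ M are connected by a discrete path η_0 = η', η_1, ..., η_N, η_{N+1} = η'' in M with |η_{j+1} − η_j| ≤ r_1 for all j. Then, writing B_i := M ∩ B_{r_0}(η_i) and r := 2r_0 + r_1, one has ∫_{B_0 × B_{N+1}} |u(x) − u(y)|^p dx dy ≤ ((N+1)^p / κ_0^2) ∫_{(⋃_i B_{r_0}(η_i) ∩ M)^2 ∩ {|x−y| ≤ r}} |u(x) − u(y)|^p dx dy for every u ∈ L^p(M). -/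
/-!
Normalising Lebesgue measure on each `B i = M ∩ B_{r₀}(η i)` gives probability measures `μ i`.
For probability measures, the `p`-th root of the energy `∫∫ |u x - u y|^p dμ dν` satisfies the
triangle inequality (Minkowski on a triple product), so along the path the endpoint energy is at
most `(N + 1)^p` times the largest energy of two consecutive balls. Consecutive balls are at
distance at most `2 r₀ + r₁`, and the density bound `κ₀ |B_{r₀}| ≤ |B i| ≤ |B_{r₀}|` converts
averages back into integrals at the cost of `κ₀⁻²`.
-/

open MeasureTheory ENNReal Metric Set ProbabilityTheory
open scoped Classical

section DiffEnergy

variable {E : Type*} [MeasurableSpace E]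

noncomputable def diffEnergy (p : ℝ) (u : E → ℝ) (μ ν : Measure E) : ℝ≥0∞ :=
  ∫⁻ x, ∫⁻ y, ENNReal.ofReal (|u x - u y| ^ p) ∂ν ∂μ

theorem lintegral_prod_prod {μ ν σ : Measure E} [SFinite ν] [SFinite σ]
    {f : E × E × E → ℝ≥0∞} (hf : Measurable f) :
    ∫⁻ w, f w ∂μ.prod (ν.prod σ) = ∫⁻ x, ∫⁻ z, ∫⁻ y, f (x, z, y) ∂σ ∂ν ∂μ := by
  rw [lintegral_prod _ hf.aemeasurable]
  exact lintegral_congr fun x => lintegral_prod _ (by fun_prop)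

variable {p : ℝ} {u : E → ℝ}

/-- Minkowski's inequality on `μ × ν × σ`, applied to `u x - u y = (u x - u z) + (u z - u y)`. -/
theorem diffEnergy_rpow_le_add (hp : 1 ≤ p) (hu : Measurable u) (μ ν σ : Measure E)
    [IsProbabilityMeasure μ] [IsProbabilityMeasure ν] [IsProbabilityMeasure σ] :
    diffEnergy p u μ σ ^ (1 / p) ≤ diffEnergy p u μ ν ^ (1 / p) + diffEnergy p u ν σ ^ (1 / p) := by
  have hp0 : 0 ≤ p := by linarith
  let F : E → E → ℝ≥0∞ := fun a b => ENNReal.ofReal |u a - u b|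
  have hF : ∀ a b, F a b ^ p = ENNReal.ofReal (|u a - u b| ^ p) := fun a b =>
    ENNReal.ofReal_rpow_of_nonneg (abs_nonneg _) hp0
  have htri : ∀ w : E × E × E, F w.1 w.2.2 ^ p ≤ (F w.1 w.2.1 + F w.2.1 w.2.2) ^ p := by
    refine fun w => ENNReal.rpow_le_rpow ?_ hp0
    rw [← ENNReal.ofReal_add (abs_nonneg _) (abs_nonneg _)]
    exact ENNReal.ofReal_le_ofReal (abs_sub_le _ _ _)
  calc diffEnergy p u μ σ ^ (1 / p)
      = (∫⁻ w, F w.1 w.2.2 ^ p ∂μ.prod (ν.prod σ)) ^ (1 / p) := by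
        rw [lintegral_prod_prod (by fun_prop)]
        simp [diffEnergy, hF]
    _ ≤ (∫⁻ w, (F w.1 w.2.1 + F w.2.1 w.2.2) ^ p ∂μ.prod (ν.prod σ)) ^ (1 / p) :=
        ENNReal.rpow_le_rpow (lintegral_mono htri) (by positivity)
    _ ≤ (∫⁻ w, F w.1 w.2.1 ^ p ∂μ.prod (ν.prod σ)) ^ (1 / p)
          + (∫⁻ w, F w.2.1 w.2.2 ^ p ∂μ.prod (ν.prod σ)) ^ (1 / p) :=
        ENNReal.lintegral_Lp_add_le (by fun_prop) (by fun_prop) hp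
    _ = diffEnergy p u μ ν ^ (1 / p) + diffEnergy p u ν σ ^ (1 / p) := by
        rw [lintegral_prod_prod (by fun_prop), lintegral_prod_prod (by fun_prop)]
        simp [diffEnergy, hF]

theorem diffEnergy_rpow_le_sum (hp : 1 ≤ p) (hu : Measurable u) {n : ℕ}
    (μ : Fin (n + 2) → Measure E) [∀ i, IsProbabilityMeasure (μ i)] :
    diffEnergy p u (μ 0) (μ (Fin.last (n + 1))) ^ (1 / p)
      ≤ ∑ i : Fin (n + 1), diffEnergy p u (μ i.castSucc) (μ i.succ) ^ (1 / p) := by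
  induction n with
  | zero => simp
  | succ n ih =>
    rw [Fin.sum_univ_castSucc]
    refine (diffEnergy_rpow_le_add hp hu _ (μ (Fin.last (n + 1)).castSucc) _).trans
      (add_le_add ?_ le_rfl)
    exact ih (fun i => μ i.castSucc)

theorem diffEnergy_le_of_chain (hp : 1 ≤ p) (hu : Measurable u) {n : ℕ}
    (μ : Fin (n + 2) → Measure E) [∀ i, IsProbabilityMeasure (μ i)] {C : ℝ≥0∞}
    (hC : ∀ i : Fin (n + 1), diffEnergy p u (μ i.castSucc) (μ i.succ) ≤ C) :
    diffEnergy p u (μ 0) (μ (Fin.last (n + 1))) ≤ ((n : ℝ≥0∞) + 1) ^ p * C := by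
  have hp0 : 0 < p := by linarith
  have hsum : diffEnergy p u (μ 0) (μ (Fin.last (n + 1))) ^ (1 / p)
      ≤ ((n : ℝ≥0∞) + 1) * C ^ (1 / p) :=
    calc _ ≤ ∑ i : Fin (n + 1), diffEnergy p u (μ i.castSucc) (μ i.succ) ^ (1 / p) :=
          diffEnergy_rpow_le_sum hp hu μ
      _ ≤ ∑ _i : Fin (n + 1), C ^ (1 / p) :=
          Finset.sum_le_sum fun i _ => ENNReal.rpow_le_rpow (hC i) (by positivity)
      _ = ((n : ℝ≥0∞) + 1) * C ^ (1 / p) := by simp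
  have := ENNReal.rpow_le_rpow hsum hp0.le
  rwa [← ENNReal.rpow_mul, one_div_mul_cancel hp0.ne', ENNReal.rpow_one,
    ENNReal.mul_rpow_of_nonneg _ _ hp0.le, ← ENNReal.rpow_mul, one_div_mul_cancel hp0.ne',
    ENNReal.rpow_one] at this

theorem diffEnergy_cond (μ : Measure E) {s t : Set E} (ht : μ t ≠ 0) :
    diffEnergy p u μ[|s] μ[|t]
      = (μ s)⁻¹ * (μ t)⁻¹ * ∫⁻ x in s, ∫⁻ y in t, ENNReal.ofReal (|u x - u y| ^ p) ∂μ ∂μ := by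
  simp only [diffEnergy, ProbabilityTheory.cond, lintegral_smul_measure, smul_eq_mul,
    lintegral_const_mul' _ _ (ENNReal.inv_ne_top.2 ht)]
  ring

theorem setLIntegral_setLIntegral_le_of_chain (hp : 1 ≤ p) (hu : Measurable u) (μ : Measure E)
    {n : ℕ} (B : Fin (n + 2) → Set E) {κ m R : ℝ≥0∞} (hκ : κ ≠ 0) (hm₀ : m ≠ 0) (hm : m ≠ ∞)
    (hlow : ∀ i, κ * m ≤ μ (B i)) (hup : ∀ i, μ (B i) ≤ m)
    (hR : ∀ i : Fin (n + 1),
      ∫⁻ x in B i.castSucc, ∫⁻ y in B i.succ, ENNReal.ofReal (|u x - u y| ^ p) ∂μ ∂μ ≤ R) :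
    ∫⁻ x in B 0, ∫⁻ y in B (Fin.last (n + 1)), ENNReal.ofReal (|u x - u y| ^ p) ∂μ ∂μ
      ≤ ((n : ℝ≥0∞) + 1) ^ p / κ ^ 2 * R := by
  have hB₀ : ∀ i, μ (B i) ≠ 0 := fun i =>
    (lt_of_lt_of_le (ENNReal.mul_pos hκ hm₀) (hlow i)).ne'
  have hB : ∀ i, μ (B i) ≠ ∞ := fun i => ((hup i).trans_lt hm.lt_top).ne
  have hprob : ∀ i, IsProbabilityMeasure μ[|B i] := fun i =>
    cond_isProbabilityMeasure_of_finite (hB₀ i) (hB i)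
  have hstep : ∀ i : Fin (n + 1), diffEnergy p u μ[|B i.castSucc] μ[|B i.succ]
      ≤ (κ * m)⁻¹ * (κ * m)⁻¹ * R := by
    intro i
    rw [diffEnergy_cond μ (hB₀ _)]
    gcongr
    exacts [hlow _, hlow _, hR i]
  calc ∫⁻ x in B 0, ∫⁻ y in B (Fin.last (n + 1)), ENNReal.ofReal (|u x - u y| ^ p) ∂μ ∂μ
      = μ (B 0) * μ (B (Fin.last (n + 1)))
          * diffEnergy p u μ[|B 0] μ[|B (Fin.last (n + 1))] := by
        rw [diffEnergy_cond μ (hB₀ _), ← mul_assoc, mul_mul_mul_comm,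
          ENNReal.mul_inv_cancel (hB₀ _) (hB _), ENNReal.mul_inv_cancel (hB₀ _) (hB _), one_mul,
          one_mul]
    _ ≤ m * m * (((n : ℝ≥0∞) + 1) ^ p * ((κ * m)⁻¹ * (κ * m)⁻¹ * R)) := by
        gcongr
        exacts [hup _, hup _, diffEnergy_le_of_chain hp hu (fun i => μ[|B i]) hstep]
    _ = ((n : ℝ≥0∞) + 1) ^ p / κ ^ 2 * R := by
        rw [ENNReal.mul_inv (Or.inl hκ) (Or.inr hm₀), ENNReal.div_eq_inv_mul, ENNReal.inv_pow]
        calc _ = (m * m⁻¹) * (m * m⁻¹) * (((n : ℝ≥0∞) + 1) ^ p * (κ⁻¹ ^ 2 * R)) := by ring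
          _ = _ := by rw [ENNReal.mul_inv_cancel hm₀ hm, one_mul, one_mul]; ring

theorem setLIntegral_setLIntegral_congr_of_ae_eq {μ : Measure E} {S s t : Set E} {g : E → ℝ}
    (h : u =ᵐ[μ.restrict S] g) (hs : s ⊆ S) (ht : t ⊆ S) (Φ : E → E → ℝ → ℝ → ℝ≥0∞) :
    ∫⁻ x in s, ∫⁻ y in t, Φ x y (u x) (u y) ∂μ ∂μ
      = ∫⁻ x in s, ∫⁻ y in t, Φ x y (g x) (g y) ∂μ ∂μ := by
  refine lintegral_congr_ae ?_
  filter_upwards [ae_restrict_of_ae_restrict_of_subset hs h] with x hx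
  refine lintegral_congr_ae ?_
  filter_upwards [ae_restrict_of_ae_restrict_of_subset ht h] with y hy
  rw [hx, hy]

end DiffEnergy

theorem setLIntegral_setLIntegral_le_of_dist_le {X : Type*} [PseudoMetricSpace X]
    [MeasurableSpace X] (μ : Measure X) {S s t : Set X} (hs : MeasurableSet s)
    (ht : MeasurableSet t) (hsS : s ⊆ S) (htS : t ⊆ S) {r : ℝ}
    (hst : ∀ x ∈ s, ∀ y ∈ t, dist x y ≤ r) (f : X → X → ℝ≥0∞) :
    ∫⁻ x in s, ∫⁻ y in t, f x y ∂μ ∂μ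
      ≤ ∫⁻ x in S, ∫⁻ y in S, if dist x y ≤ r then f x y else 0 ∂μ ∂μ :=
  calc ∫⁻ x in s, ∫⁻ y in t, f x y ∂μ ∂μ
      = ∫⁻ x in s, ∫⁻ y in t, if dist x y ≤ r then f x y else 0 ∂μ ∂μ :=
        setLIntegral_congr_fun hs fun x hx =>
          setLIntegral_congr_fun ht fun y hy => (if_pos (hst x hx y hy)).symm
    _ ≤ _ := lintegral_mono' (Measure.restrict_mono hsS le_rfl) fun _ =>
        lintegral_mono' (Measure.restrict_mono htS le_rfl) le_rfl

theorem stmt_3_general {d : ℕ} (M : Set (EuclideanSpace ℝ (Fin d))) (hM : MeasurableSet M)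
    (p : ℝ) (hp : 1 ≤ p) (κ₀ r₀ r₁ : ℝ) (hκ : 0 < κ₀) (hr₀ : 0 < r₀)
    (hdens : ∀ η ∈ M, ENNReal.ofReal κ₀ * volume (Metric.ball η r₀)
      ≤ volume (M ∩ Metric.ball η r₀))
    (N : ℕ) (η : Fin (N + 2) → EuclideanSpace ℝ (Fin d))
    (hηM : ∀ i, η i ∈ M)
    (hstep : ∀ i : Fin (N + 1), dist (η i.succ) (η i.castSucc) ≤ r₁)
    (u : EuclideanSpace ℝ (Fin d) → ℝ)
    (hu : MemLp u (ENNReal.ofReal p) (volume.restrict M)) :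
    ∫⁻ x in M ∩ Metric.ball (η 0) r₀,
      ∫⁻ y in M ∩ Metric.ball (η (Fin.last (N + 1))) r₀,
        ENNReal.ofReal (|u x - u y| ^ p)
    ≤ ENNReal.ofReal ((N + 1 : ℝ) ^ p / κ₀ ^ 2) *
      ∫⁻ x in M ∩ ⋃ i, Metric.ball (η i) r₀,
        ∫⁻ y in M ∩ ⋃ i, Metric.ball (η i) r₀,
          if dist x y ≤ 2 * r₀ + r₁ then ENNReal.ofReal (|u x - u y| ^ p) else 0 := by
  obtain ⟨g, hg, hug⟩ : ∃ g, Measurable g ∧ u =ᵐ[volume.restrict M] g :=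
    ⟨hu.1.mk u, hu.1.stronglyMeasurable_mk.measurable, hu.1.ae_eq_mk⟩
  rw [setLIntegral_setLIntegral_congr_of_ae_eq hug inter_subset_left inter_subset_left
      (fun _ _ a b => ENNReal.ofReal (|a - b| ^ p)),
    setLIntegral_setLIntegral_congr_of_ae_eq hug inter_subset_left inter_subset_left
      (fun x y a b => if dist x y ≤ 2 * r₀ + r₁ then ENNReal.ofReal (|a - b| ^ p) else 0)]
  have hball : ∀ x, volume (ball x r₀) = volume (ball (0 : EuclideanSpace ℝ (Fin d)) r₀) :=
    fun x => Measure.addHaar_ball_center volume x r₀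
  have hcoef : ENNReal.ofReal ((N + 1 : ℝ) ^ p / κ₀ ^ 2)
      = ((N : ℝ≥0∞) + 1) ^ p / ENNReal.ofReal κ₀ ^ 2 := by
    rw [ENNReal.ofReal_div_of_pos (by positivity), ENNReal.ofReal_pow hκ.le,
      ← ENNReal.ofReal_rpow_of_nonneg (by positivity) (by linarith),
      ENNReal.ofReal_add (by positivity) zero_le_one, ENNReal.ofReal_natCast, ENNReal.ofReal_one]
  rw [hcoef]
  refine setLIntegral_setLIntegral_le_of_chain hp hg volume (fun i => M ∩ ball (η i) r₀)
    (ENNReal.ofReal_pos.2 hκ).ne' (measure_ball_pos _ _ hr₀).ne' measure_ball_lt_top.ne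
    (fun i => hball (η i) ▸ hdens _ (hηM i))
    (fun i => hball (η i) ▸ measure_mono inter_subset_right) fun i => ?_
  refine setLIntegral_setLIntegral_le_of_dist_le volume (hM.inter measurableSet_ball)
    (hM.inter measurableSet_ball)
    (inter_subset_inter_right _ (subset_iUnion (fun j => ball (η j) r₀) _))
    (inter_subset_inter_right _ (subset_iUnion (fun j => ball (η j) r₀) _))
    (fun x hx y hy => ?_) _
  linarith [dist_triangle4 x (η i.castSucc) (η i.succ) y, mem_ball.1 hx.2, mem_ball'.1 hy.2,
    dist_comm (η i.castSucc) (η i.succ), hstep i]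

/-- chaining estimate along a discrete path in a set with uniform density. -/
theorem stmt_3 {d : ℕ} (M : Set (EuclideanSpace ℝ (Fin d))) (hM : MeasurableSet M)
    (p : ℝ) (hp : 1 ≤ p) (κ₀ r₀ r₁ : ℝ) (hκ : 0 < κ₀) (hr₀ : 0 < r₀) (hr₁ : 0 < r₁)
    (hdens : ∀ η ∈ M, ENNReal.ofReal κ₀ * volume (Metric.ball η r₀)
      ≤ volume (M ∩ Metric.ball η r₀))
    (N : ℕ) (η : Fin (N + 2) → EuclideanSpace ℝ (Fin d))
    (hηM : ∀ i, η i ∈ M)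
    (hstep : ∀ i : Fin (N + 1), dist (η i.succ) (η i.castSucc) ≤ r₁)
    (u : EuclideanSpace ℝ (Fin d) → ℝ)
    (hu : MemLp u (ENNReal.ofReal p) (volume.restrict M)) :
    ∫⁻ x in M ∩ Metric.ball (η 0) r₀,
      ∫⁻ y in M ∩ Metric.ball (η (Fin.last (N + 1))) r₀,
        ENNReal.ofReal (|u x - u y| ^ p)
    ≤ ENNReal.ofReal ((N + 1 : ℝ) ^ p / κ₀ ^ 2) *
      ∫⁻ x in M ∩ ⋃ i, Metric.ball (η i) r₀,
        ∫⁻ y in M ∩ ⋃ i, Metric.ball (η i) r₀,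
          if dist x y ≤ 2 * r₀ + r₁ then ENNReal.ofReal (|u x - u y| ^ p) else 0 :=
  stmt_3_general M hM p hp κ₀ r₀ r₁ hκ hr₀ hdens N η hηM hstep u hu
end

section
/- Let A be a nonnegative self-adjoint bounded operator on L^2(Y_soft) with spectral resolution E_s, let μ be the finite positive measure μ(B) = (E(B) 1_{Y_soft}, 1_{Y_soft}), with support L ⊂ Sp(A), and define β(λ) = λ + λ² ∫_L (s − λ)^{-1} dμ(s) for λ ∉ L. Then β is differentiable on its domain and β'(λ) ≥ 1 − μ(L) for all λ ∉ L. -/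
/-!
Write `β(t) = t + t² G(t)` with `G(t) = ∫_L (s - t)⁻¹ dμ(s)`. Off the closed set `L` the integrand
is uniformly bounded together with its `t`-derivative `(s - t)⁻²`, so `G` may be differentiated under
the integral sign. The product rule then gives
`β'(λ) = 1 + ∫_L (2λ (s - λ)⁻¹ + λ² (s - λ)⁻²) dμ = 1 + ∫_L ((s / (s - λ))² - 1) dμ ≥ 1 - μ(L)`.
-/

open MeasureTheory Metric

section CauchyTransform

variable {ν : Measure ℝ} {K : Set ℝ} {x : ℝ}

theorem exists_pos_le_abs_sub_of_notMem (hK : IsClosed K) (hx : x ∉ K) :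
    ∃ δ > 0, ∀ s ∈ K, ∀ t ∈ ball x δ, δ ≤ |s - t| := by
  obtain ⟨ε, hε, hball⟩ := isOpen_iff.mp hK.isOpen_compl x hx
  refine ⟨ε / 2, by positivity, fun s hs t ht => ?_⟩
  have hsx : ε ≤ dist s x := by
    by_contra! h
    exact hball (mem_ball'.mpr (by rwa [dist_comm] at h)) hs
  have := dist_triangle s t x
  rw [mem_ball] at ht
  rw [← Real.dist_eq]
  linarith

theorem norm_inv_sub_pow_le {δ : ℝ} (hδ : 0 < δ) {s t : ℝ} (hst : δ ≤ |s - t|) (n : ℕ) :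
    ‖((s - t) ^ n)⁻¹‖ ≤ (δ ^ n)⁻¹ := by
  rw [norm_inv, norm_pow, Real.norm_eq_abs]
  exact inv_anti₀ (pow_pos hδ n) (pow_le_pow_left₀ hδ.le hst n)

variable [IsFiniteMeasure ν]

theorem integrable_inv_sub_pow (hK : IsClosed K) (hν : ∀ᵐ s ∂ν, s ∈ K) (hx : x ∉ K) (n : ℕ) :
    Integrable (fun s => ((s - x) ^ n)⁻¹) ν := by
  obtain ⟨δ, hδ, hsep⟩ := exists_pos_le_abs_sub_of_notMem hK hx
  refine Integrable.of_bound (by fun_prop) (δ ^ n)⁻¹ ?_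
  filter_upwards [hν] with s hs
  exact norm_inv_sub_pow_le hδ (hsep s hs x (mem_ball_self hδ)) n

theorem hasDerivAt_integral_inv_sub (hK : IsClosed K) (hν : ∀ᵐ s ∂ν, s ∈ K) (hx : x ∉ K) :
    HasDerivAt (fun t => ∫ s, (s - t)⁻¹ ∂ν) (∫ s, ((s - x) ^ 2)⁻¹ ∂ν) x := by
  obtain ⟨δ, hδ, hsep⟩ := exists_pos_le_abs_sub_of_notMem hK hx
  refine (hasDerivAt_integral_of_dominated_loc_of_deriv_le (F' := fun t s => ((s - t) ^ 2)⁻¹)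
    (bound := fun _ => (δ ^ 2)⁻¹) (ball_mem_nhds x hδ) (.of_forall fun _ => by fun_prop)
    (by simpa using integrable_inv_sub_pow hK hν hx 1) (by fun_prop) ?_ (integrable_const _)
    ?_).2
  · filter_upwards [hν] with s hs t ht
    exact norm_inv_sub_pow_le hδ (hsep s hs t ht) 2
  · filter_upwards [hν] with s hs t ht
    have hne : s - t ≠ 0 := abs_pos.mp (hδ.trans_le (hsep s hs t ht))
    simpa using ((hasDerivAt_id t).const_sub s).fun_inv hne

end CauchyTransform

theorem neg_one_le_two_mul_inv_sub_add_sq_mul_inv_sq {s x : ℝ} (h : s ≠ x) :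
    -1 ≤ 2 * x * (s - x)⁻¹ + x ^ 2 * ((s - x) ^ 2)⁻¹ := by
  have hne : s - x ≠ 0 := sub_ne_zero.mpr h
  have hid : 2 * x * (s - x)⁻¹ + x ^ 2 * ((s - x) ^ 2)⁻¹ = (s * (s - x)⁻¹) ^ 2 - 1 := by
    field_simp
    ring
  linarith [hid, sq_nonneg (s * (s - x)⁻¹)]

theorem stmt_7_general (μ : Measure ℝ) [IsFiniteMeasure μ] (L : Set ℝ)
    (hL_cpt : IsCompact L) :
    ∀ lam : ℝ, lam ∉ L →
      ∃ b : ℝ,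
        HasDerivAt (fun t : ℝ => t + t ^ 2 * ∫ s in L, (s - t)⁻¹ ∂μ) b lam ∧
        1 - (μ L).toReal ≤ b := by
  intro lam hlam
  have hL := hL_cpt.isClosed
  have hmem : ∀ᵐ s ∂μ.restrict L, s ∈ L := ae_restrict_mem hL.measurableSet
  refine ⟨_, (hasDerivAt_id lam).add ((hasDerivAt_pow 2 lam).mul
    (hasDerivAt_integral_inv_sub hL hmem hlam)), ?_⟩
  have h1 : Integrable (fun s => 2 * lam * (s - lam)⁻¹) (μ.restrict L) := by
    simpa using (integrable_inv_sub_pow hL hmem hlam 1).const_mul (2 * lam)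
  have h2 : Integrable (fun s => lam ^ 2 * ((s - lam) ^ 2)⁻¹) (μ.restrict L) :=
    (integrable_inv_sub_pow hL hmem hlam 2).const_mul _
  have hlower : ∫ _ in L, (-1 : ℝ) ∂μ ≤
      ∫ s in L, (2 * lam * (s - lam)⁻¹ + lam ^ 2 * ((s - lam) ^ 2)⁻¹) ∂μ := by
    refine integral_mono_ae (integrable_const _) (h1.fun_add h2) ?_
    filter_upwards [hmem] with s hs
    exact neg_one_le_two_mul_inv_sub_add_sq_mul_inv_sq (ne_of_mem_of_not_mem hs hlam)
  rw [integral_add h1 h2, integral_const_mul, integral_const_mul] at hlower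
  simp only [setIntegral_const, measureReal_def, smul_eq_mul, mul_neg_one, Nat.cast_ofNat] at hlower ⊢
  linarith

/-- the Zhikov β-function is differentiable off the support `L` of the spectral
measure `μ`, with derivative at least `1 - μ(L)`. -/
theorem stmt_7 (μ : Measure ℝ) [IsFiniteMeasure μ] (L : Set ℝ)
    (hL_cpt : IsCompact L) (hL_nonneg : L ⊆ Set.Ici 0) (hsupp : μ Lᶜ = 0) :
    ∀ lam : ℝ, lam ∉ L →
      ∃ b : ℝ,
        HasDerivAt (fun t : ℝ => t + t ^ 2 * ∫ s in L, (s - t)⁻¹ ∂μ) b lam ∧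
        1 - (μ L).toReal ≤ b :=
  stmt_7_general μ L hL_cpt
end

section
/- With the notation of the previous statement, suppose λ_0 ∈ L satisfies μ({λ_0}) > 0 and (λ_0 − δ, λ_0) ∩ L = ∅ for some δ > 0, and λ_0 ≠ 0. Then β(λ) → +∞ as λ → λ_0 from the left. -/
/-!
Once `t` is within `δ / 2` to the left of `λ₀`, every point `s` outside the gap satisfies
`|s - t| ≥ λ₀ - t` and `(s - t)⁻¹ ≥ -2 / δ`. Hence the integrand is bounded, and the integral is at
least `μ {λ₀} (λ₀ - t)⁻¹ - (2 / δ) μ(ℝ)`, which tends to `+∞`; since `t² → λ₀² > 0`, so does `β`.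
-/

open MeasureTheory ENNReal
open Set Filter Topology

section GapEstimates

variable {a δ s t : ℝ}

lemma sub_le_abs_sub_of_notMem_Ioo (hs : s ∉ Ioo (a - δ) a) (ht : t ∈ Ioo (a - δ / 2) a) :
    a - t ≤ |s - t| := by
  rw [mem_Ioo, not_and_or, not_lt, not_lt] at hs
  obtain ⟨ht₁, ht₂⟩ := ht
  rcases hs with hs | hs
  · rw [abs_of_neg (by linarith)]; linarith
  · rw [abs_of_nonneg (by linarith)]; linarith

lemma neg_two_div_le_inv_sub_of_notMem_Ioo (hs : s ∉ Ioo (a - δ) a)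
    (ht : t ∈ Ioo (a - δ / 2) a) : -(2 / δ) ≤ (s - t)⁻¹ := by
  obtain ⟨ht₁, ht₂⟩ := ht
  have hδ : 0 < δ := by linarith
  rcases le_or_gt a s with has | hsa
  · exact (neg_nonpos.2 (by positivity)).trans (inv_nonneg.2 (by linarith))
  · have hsδ : s ≤ a - δ := by
      by_contra! h
      exact hs ⟨h, hsa⟩
    rw [← neg_sub, inv_neg, neg_le_neg_iff, ← inv_div]
    exact inv_anti₀ (by positivity) (by linarith)

end GapEstimates

section GapIntegral

variable {ν : Measure ℝ} [IsFiniteMeasure ν] {a δ t : ℝ}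

lemma integrable_inv_sub_of_measure_Ioo_eq_zero (hgap : ν (Ioo (a - δ) a) = 0)
    (ht : t ∈ Ioo (a - δ / 2) a) : Integrable (fun s => (s - t)⁻¹) ν := by
  refine Integrable.mono' (integrable_const (a - t)⁻¹)
    (measurable_id.sub_const t).inv.aestronglyMeasurable ?_
  filter_upwards [measure_eq_zero_iff_ae_notMem.1 hgap] with s hs
  rw [norm_inv, Real.norm_eq_abs]
  exact inv_anti₀ (sub_pos.2 ht.2) (sub_le_abs_sub_of_notMem_Ioo hs ht)

lemma measureReal_singleton_mul_inv_sub_le_integral (hgap : ν (Ioo (a - δ) a) = 0)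
    (ht : t ∈ Ioo (a - δ / 2) a) :
    ν.real {a} * (a - t)⁻¹ - 2 / δ * ν.real univ ≤ ∫ s, (s - t)⁻¹ ∂ν := by
  set atom : ℝ → ℝ := ({a} : Set ℝ).indicator fun _ => (a - t)⁻¹
  have hatom_int : Integrable atom ν := (integrable_const _).indicator (measurableSet_singleton a)
  have hbound : ∀ᵐ s ∂ν, atom s - 2 / δ ≤ (s - t)⁻¹ := by
    filter_upwards [measure_eq_zero_iff_ae_notMem.1 hgap] with s hs
    by_cases hsa : s = a
    · simpa [atom, hsa] using div_nonneg zero_le_two (by linarith [ht.1, ht.2] : (0 : ℝ) ≤ δ)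
    · simp [atom, hsa, neg_two_div_le_inv_sub_of_notMem_Ioo hs ht]
  calc ν.real {a} * (a - t)⁻¹ - 2 / δ * ν.real univ = ∫ s, (atom s - 2 / δ) ∂ν := by
        rw [integral_sub hatom_int (integrable_const _),
          integral_indicator_const _ (measurableSet_singleton a), integral_const, smul_eq_mul,
          smul_eq_mul, mul_comm (ν.real univ)]
    _ ≤ ∫ s, (s - t)⁻¹ ∂ν :=
        integral_mono_ae (hatom_int.sub (integrable_const _))
          (integrable_inv_sub_of_measure_Ioo_eq_zero hgap ht) hbound

lemma tendsto_integral_inv_sub_nhdsLT (hδ : 0 < δ) (hatom : 0 < ν {a})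
    (hgap : ν (Ioo (a - δ) a) = 0) :
    Tendsto (fun t => ∫ s, (s - t)⁻¹ ∂ν) (𝓝[<] a) atTop := by
  have hdist : Tendsto (fun t => a - t) (𝓝[<] a) (𝓝[>] 0) := by
    refine tendsto_nhdsWithin_iff.2
      ⟨?_, eventually_nhdsWithin_of_forall fun t ht => mem_Ioi.2 (sub_pos.2 ht)⟩
    simpa using ((continuous_sub_left a).tendsto a).mono_left nhdsWithin_le_nhds
  have hatom' : 0 < ν.real {a} := toReal_pos hatom.ne' (measure_ne_top ν _)
  have hminorant := ((tendsto_inv_nhdsGT_zero.comp hdist).const_mul_atTop hatom').atTop_add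
    (tendsto_const_nhds (x := -(2 / δ * ν.real univ)))
  refine tendsto_atTop_mono' _ ?_ hminorant
  filter_upwards [Ioo_mem_nhdsLT (by linarith : a - δ / 2 < a)] with t ht
  simpa only [Function.comp_def, sub_eq_add_neg] using
    measureReal_singleton_mul_inv_sub_le_integral hgap ht

end GapIntegral

theorem stmt_8_general (μ : Measure ℝ) [IsFiniteMeasure μ] (L : Set ℝ)
    (lam₀ δ : ℝ) (hlam₀ : lam₀ ∈ L) (hlam₀ne : lam₀ ≠ 0) (hδ : 0 < δ)
    (hatom : 0 < μ {lam₀}) (hgap : Set.Ioo (lam₀ - δ) lam₀ ∩ L = ∅) :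
    Filter.Tendsto (fun t : ℝ => t + t ^ 2 * ∫ s in L, (s - t)⁻¹ ∂μ)
      (nhdsWithin lam₀ (Set.Ioo (lam₀ - δ) lam₀)) Filter.atTop := by
  have hatomL : 0 < μ.restrict L {lam₀} := by
    rwa [Measure.restrict_apply (measurableSet_singleton _), singleton_inter_of_mem hlam₀]
  have hgapL : μ.restrict L (Ioo (lam₀ - δ) lam₀) = 0 := by
    rw [Measure.restrict_apply measurableSet_Ioo, hgap, measure_empty]
  have hid : Tendsto (fun t : ℝ => t) (𝓝[Ioo (lam₀ - δ) lam₀] lam₀) (𝓝 lam₀) :=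
    tendsto_nhdsWithin_of_tendsto_nhds tendsto_id
  have hintegral : Tendsto (fun t => ∫ s in L, (s - t)⁻¹ ∂μ) (𝓝[Ioo (lam₀ - δ) lam₀] lam₀)
      atTop :=
    (tendsto_integral_inv_sub_nhdsLT hδ hatomL hgapL).mono_left
      (nhdsWithin_mono _ Ioo_subset_Iio_self)
  exact hid.add_atTop ((hid.pow 2).pos_mul_atTop (by positivity) hintegral)

/-- the Zhikov β-function blows up to `+∞` at an atom `lam₀` of the spectral
measure approached from the left through a gap of the support. -/
theorem stmt_8 (μ : Measure ℝ) [IsFiniteMeasure μ] (L : Set ℝ)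
    (hL_cpt : IsCompact L) (hL_nonneg : L ⊆ Set.Ici 0) (hsupp : μ Lᶜ = 0)
    (lam₀ δ : ℝ) (hlam₀ : lam₀ ∈ L) (hlam₀ne : lam₀ ≠ 0) (hδ : 0 < δ)
    (hatom : 0 < μ {lam₀}) (hgap : Set.Ioo (lam₀ - δ) lam₀ ∩ L = ∅) :
    Filter.Tendsto (fun t : ℝ => t + t ^ 2 * ∫ s in L, (s - t)⁻¹ ∂μ)
      (nhdsWithin lam₀ (Set.Ioo (lam₀ - δ) lam₀)) Filter.atTop :=
  stmt_8_general μ L lam₀ δ hlam₀ hlam₀ne hδ hatom hgap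
end

section
/- Let u, f ∈ L^2(R^d), both nonzero, and let L > 0. Then there exists ζ ∈ L·Z^d such that ‖u‖_{L^2(□^{4L}_ζ)} ≤ √(4^d + 2^d) ‖u‖_{L^2(□^L_ζ)}, ‖f‖_{L^2(□^{2L}_ζ)}/‖f‖_{L^2} ≤ √(4^d + 2^d) ‖u‖_{L^2(□^L_ζ)}/‖u‖_{L^2}, and ‖u‖_{L^2(□^L_ζ)} ≠ 0, where □^m_ζ := [ζ − m, ζ + m]^d. -/
/-!
Off the null set of points having a coordinate in `L ℤ`, every point of `ℝ^d` lies in exactly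
`(2k)^d` of the cubes of half-side `k L` centred at `L ℤ^d`. Summing over the centres therefore
gives `∑ ‖u‖²_{□^L} = 2^d ‖u‖²`, `∑ ‖u‖²_{□^{4L}} = 8^d ‖u‖²` and `∑ ‖f‖²_{□^{2L}} = 4^d ‖f‖²`.
If every cube with `‖u‖_{□^L} ≠ 0` violated one of the two inequalities, then
`(4^d + 2^d) ‖u‖²_{□^L} ‖f‖² < ‖u‖²_{□^{4L}} ‖f‖² + ‖f‖²_{□^{2L}} ‖u‖²` on each of those cubes (and
`≤` on the others); summing would give `(4^d + 2^d) 2^d < 8^d + 4^d`, which is false.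
-/

open MeasureTheory ENNReal

theorem MeasureTheory.eLpNorm_two_sq {α E : Type*} [MeasurableSpace α] [NormedAddCommGroup E]
    (μ : Measure α) (g : α → E) : eLpNorm g 2 μ ^ 2 = ∫⁻ x, ‖g x‖ₑ ^ 2 ∂μ := by
  simpa using eLpNorm_nnreal_pow_eq_lintegral (f := g) (μ := μ) (p := 2) two_ne_zero

theorem ENNReal.exists_ne_zero_le_of_tsum_le {α : Type*} {f g : α → ℝ≥0∞} (hf : ∑' a, f a ≠ ∞)
    (hf₀ : ∑' a, f a ≠ 0) (hgf : ∑' a, g a ≤ ∑' a, f a) : ∃ a, f a ≠ 0 ∧ g a ≤ f a := by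
  by_contra! h
  obtain ⟨a, ha⟩ : ∃ a, f a ≠ 0 := by
    by_contra! h'
    exact hf₀ (ENNReal.tsum_eq_zero.mpr h')
  have hfg : ∀ a, f a ≤ g a := fun a ↦ by
    rcases eq_or_ne (f a) 0 with h₀ | h₀
    · exact h₀ ▸ zero_le
    · exact (h a h₀).le
  exact (ENNReal.tsum_lt_tsum hf hfg (h a ha)).not_ge hgf

theorem ENNReal.le_ofReal_sqrt_mul_of_sq_le {a b : ℝ≥0∞} {c : ℝ} (hc : 0 ≤ c)
    (h : a ^ 2 ≤ ENNReal.ofReal c * b ^ 2) : a ≤ ENNReal.ofReal √c * b := by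
  rwa [← ENNReal.pow_le_pow_left_iff two_ne_zero, mul_pow,
    ← ENNReal.ofReal_pow (Real.sqrt_nonneg c), Real.sq_sqrt hc]

theorem ENNReal.exists_le_mul_of_tsum_eq {α : Type*} {a b c : α → ℝ≥0∞} {p q r C U F : ℝ≥0∞}
    (ha : ∑' z, a z = p * U) (hb : ∑' z, b z = q * U) (hc : ∑' z, c z = r * F)
    (hC : C * p = q + r) (hp₀ : p ≠ 0) (hp : p ≠ ∞) (hC₀ : C ≠ 0) (hC_top : C ≠ ∞)
    (hU₀ : U ≠ 0) (hU : U ≠ ∞) (hF₀ : F ≠ 0) (hF : F ≠ ∞) :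
    ∃ z, b z ≤ C * a z ∧ c z * U ≤ C * (a z * F) ∧ a z ≠ 0 := by
  have hsum : ∑' z, C * (a z * F) = ∑' z, (b z * F + c z * U) := by
    rw [ENNReal.tsum_add, ENNReal.tsum_mul_right, ENNReal.tsum_mul_right, ENNReal.tsum_mul_left,
      ENNReal.tsum_mul_right, ha, hb, hc, ← mul_assoc, ← mul_assoc, hC]
    ring
  obtain ⟨z, hz₀, hz⟩ := ENNReal.exists_ne_zero_le_of_tsum_le (g := fun z ↦ b z * F + c z * U)
    (by rw [ENNReal.tsum_mul_left, ENNReal.tsum_mul_right, ha]; finiteness)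
    (by rw [ENNReal.tsum_mul_left, ENNReal.tsum_mul_right, ha]; simp [*]) hsum.ge
  refine ⟨z, ?_, le_add_self.trans hz, fun h ↦ hz₀ (by simp [h])⟩
  rw [← ENNReal.mul_le_mul_iff_left hF₀ hF, mul_assoc]
  exact le_self_add.trans hz

section LatticeCubes

variable {ι : Type*} [Fintype ι]

def closedCube (c : ι → ℝ) (r : ℝ) : Set (ι → ℝ) := {x | ∀ i, |x i - c i| ≤ r}

theorem measurableSet_closedCube (c : ι → ℝ) (r : ℝ) : MeasurableSet (closedCube c r) := by
  simp only [closedCube, Set.ofPred_forall]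
  exact .iInter fun i ↦ measurableSet_le ((measurable_pi_apply i).sub_const _).abs measurable_const

theorem card_Icc_ceil_sub_floor_add {t : ℝ} (ht : t ∉ Set.range Int.cast) (k : ℕ) :
    (Finset.Icc ⌈t - k⌉ ⌊t + k⌋).card = 2 * k := by
  rw [Int.card_Icc, Int.floor_add_natCast, Int.ceil_sub_natCast,
    (Int.ceil_eq_floor_add_one_iff_notMem t).mpr ht]
  omega

theorem mem_closedCube_lattice_iff [DecidableEq ι] {L : ℝ} (hL : 0 < L) (k : ℕ) (x : ι → ℝ)
    (z : ι → ℤ) :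
    x ∈ closedCube (fun i ↦ L * z i) (k * L) ↔
      z ∈ Fintype.piFinset fun i ↦ Finset.Icc ⌈x i / L - k⌉ ⌊x i / L + k⌋ := by
  simp only [closedCube, Set.mem_ofPred_eq, Fintype.mem_piFinset, Finset.mem_Icc, Int.ceil_le,
    Int.le_floor, abs_le]
  refine forall_congr' fun i ↦ ?_
  have e : x i / L * L = x i := div_mul_cancel₀ _ hL.ne'
  constructor <;> rintro ⟨h₁, h₂⟩ <;> constructor <;> nlinarith

theorem ae_tsum_indicator_closedCube_lattice {L : ℝ} (hL : 0 < L) (k : ℕ) :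
    ∀ᵐ x : ι → ℝ, ∑' z : ι → ℤ, (closedCube (fun i ↦ L * z i) (k * L)).indicator 1 x
      = (((2 * k) ^ Fintype.card ι : ℕ) : ℝ≥0∞) := by
  classical
  have hnull : ∀ i : ι, ∀ᵐ x : ι → ℝ, x i / L ∉ Set.range Int.cast := by
    intro i
    have h : ∀ᵐ t : ℝ, t / L ∉ Set.range Int.cast := by
      filter_upwards [(Set.countable_range fun n : ℤ ↦ L * n).ae_notMem volume] with t ht
      rintro ⟨n, hn⟩
      exact ht ⟨n, by simp only [hn, mul_div_cancel₀ t hL.ne']⟩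
    rw [volume_pi]
    exact (Measure.tendsto_eval_ae_ae (μ := fun _ : ι ↦ (volume : Measure ℝ))).eventually h
  filter_upwards [ae_all_iff.mpr hnull] with x hx
  have hset : {z : ι → ℤ | x ∈ closedCube (fun i ↦ L * z i) (k * L)}
      = Fintype.piFinset fun i ↦ Finset.Icc ⌈x i / L - k⌉ ⌊x i / L + k⌋ := by
    ext z; exact mem_closedCube_lattice_iff hL k x z
  calc ∑' z : ι → ℤ, (closedCube (fun i ↦ L * z i) (k * L)).indicator 1 x
      = ∑' z : ι → ℤ, {z : ι → ℤ | x ∈ closedCube (fun i ↦ L * z i) (k * L)}.indicator 1 z := by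
        congr! 1
    _ = _ := by
        rw [← tsum_subtype]
        simp only [Pi.one_apply]
        rw [ENNReal.tsum_set_one, hset, Set.encard_coe_eq_coe_finsetCard,
          Fintype.card_piFinset,
          Finset.prod_congr rfl fun i _ ↦ card_Icc_ceil_sub_floor_add (hx i) k, Finset.prod_const,
          Finset.card_univ]
        norm_cast

theorem sum_restrict_closedCube_lattice {L : ℝ} (hL : 0 < L) (k : ℕ) :
    Measure.sum (fun z : ι → ℤ ↦ volume.restrict (closedCube (fun i ↦ L * z i) (k * L)))
      = (((2 * k) ^ Fintype.card ι : ℕ) : ℝ≥0∞) • volume := by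
  ext s hs
  calc Measure.sum (fun z : ι → ℤ ↦ volume.restrict (closedCube (fun i ↦ L * z i) (k * L))) s
      = ∑' z : ι → ℤ, ∫⁻ x in s, (closedCube (fun i ↦ L * z i) (k * L)).indicator 1 x := by
        rw [Measure.sum_apply _ hs]
        refine tsum_congr fun z ↦ ?_
        rw [lintegral_indicator_one (measurableSet_closedCube _ _), Measure.restrict_apply hs,
          Measure.restrict_apply' hs, Set.inter_comm]
    _ = ∫⁻ x in s, ∑' z : ι → ℤ, (closedCube (fun i ↦ L * z i) (k * L)).indicator 1 x :=
        (lintegral_tsum fun z ↦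
          (measurable_one.indicator (measurableSet_closedCube _ _)).aemeasurable).symm
    _ = _ := by
        rw [setLIntegral_congr_fun_ae hs
            ((ae_tsum_indicator_closedCube_lattice hL k).mono fun x hx _ ↦ hx),
          setLIntegral_const, Measure.smul_apply, smul_eq_mul]

theorem tsum_eLpNorm_sq_restrict_closedCube_lattice {E : Type*} [NormedAddCommGroup E] {L : ℝ}
    (hL : 0 < L) (k : ℕ) (g : (ι → ℝ) → E) :
    ∑' z : ι → ℤ, eLpNorm g 2 (volume.restrict (closedCube (fun i ↦ L * z i) (k * L))) ^ 2
      = (2 * k) ^ Fintype.card ι * eLpNorm g 2 volume ^ 2 := by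
  simp only [eLpNorm_two_sq, ← lintegral_sum_measure, sum_restrict_closedCube_lattice hL k,
    lintegral_smul_measure, smul_eq_mul]
  push_cast
  rfl

end LatticeCubes

/-- pigeonhole choice of a good cube `□ᵐ_ζ = ζ + [-m,m]^d`, `ζ ∈ L·ℤ^d`. -/
theorem stmt_9 {d : ℕ} (u f : (Fin d → ℝ) → ℝ)
    (hu : MemLp u 2 volume) (hf : MemLp f 2 volume)
    (hu0 : ¬ u =ᵐ[volume] 0) (hf0 : ¬ f =ᵐ[volume] 0)
    (L : ℝ) (hL : 0 < L) :
    ∃ z : Fin d → ℤ,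
      let ζ : Fin d → ℝ := fun i => L * (z i : ℝ)
      let cube : ℝ → Set (Fin d → ℝ) := fun m => {x | ∀ i, |x i - ζ i| ≤ m}
      eLpNorm u 2 (volume.restrict (cube (4 * L)))
          ≤ ENNReal.ofReal (Real.sqrt (4 ^ d + 2 ^ d)) *
            eLpNorm u 2 (volume.restrict (cube L)) ∧
      eLpNorm f 2 (volume.restrict (cube (2 * L))) * eLpNorm u 2 volume
          ≤ ENNReal.ofReal (Real.sqrt (4 ^ d + 2 ^ d)) *
            (eLpNorm u 2 (volume.restrict (cube L)) * eLpNorm f 2 volume) ∧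
      eLpNorm u 2 (volume.restrict (cube L)) ≠ 0 := by
  have hsum₁ := tsum_eLpNorm_sq_restrict_closedCube_lattice hL 1 u
  have hsum₄ := tsum_eLpNorm_sq_restrict_closedCube_lattice hL 4 u
  have hsum₂ := tsum_eLpNorm_sq_restrict_closedCube_lattice hL 2 f
  norm_num at hsum₁ hsum₄ hsum₂
  have hC : ENNReal.ofReal (4 ^ d + 2 ^ d) * 2 ^ d = 8 ^ d + 4 ^ d := by
    rw [ENNReal.ofReal_add (by positivity) (by positivity), ENNReal.ofReal_pow zero_le_four,
      ENNReal.ofReal_pow zero_le_two, ENNReal.ofReal_ofNat, ENNReal.ofReal_ofNat, add_mul,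
      ← mul_pow, ← mul_pow]
    norm_num
  obtain ⟨z, hu₄, hf₂, hu₁⟩ := ENNReal.exists_le_mul_of_tsum_eq hsum₁ hsum₄ hsum₂ hC (by simp) (by simp)
    (by positivity) (by simp)
    (by simpa [eLpNorm_eq_zero_iff hu.1] using hu0) (by simpa using hu.eLpNorm_ne_top)
    (by simpa [eLpNorm_eq_zero_iff hf.1] using hf0) (by simpa using hf.eLpNorm_ne_top)
  exact ⟨z, ENNReal.le_ofReal_sqrt_mul_of_sq_le (by positivity) hu₄,
    ENNReal.le_ofReal_sqrt_mul_of_sq_le (by positivity) (by rwa [mul_pow, mul_pow]),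
    fun h ↦ hu₁ ((pow_eq_zero_iff two_ne_zero).mpr h)⟩
end

section
/- Let A be a nonnegative self-adjoint operator on a Hilbert space H with associated quadratic form 𝔞. Suppose u ∈ Dom(𝔞) with ‖u‖_H = 1, λ ∈ R, and 0 < ε < 1 satisfy |𝔞(u, v) − λ(u, v)_H| ≤ ε √(𝔞(v, v) + ‖v‖_H²) for all v ∈ Dom(𝔞). Then dist(λ, Sp(A)) ≤ |λ + 1| ε / (1 − ε). -/
/-!
If `λ ∉ Sp(A)`, solve `(A - λ) v = u`. Testing the quasimode inequality against `v` gives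
`1 ≤ ε √(𝔞(v, v) + ‖v‖²)` with `𝔞(v, v) = (u, v) + λ ‖v‖² ≥ 0`, and elementary algebra turns this
into `‖v‖⁻¹ ≤ |λ + 1| ε / (1 - ε)`. On the other hand `(A - λ)⁻¹` is self-adjoint, so its norm is
its spectral radius: some `μ ∈ Sp((A - λ)⁻¹)` has `|μ| = ‖(A - λ)⁻¹‖`, and `λ + μ⁻¹ ∈ Sp(A)` then
shows `dist(λ, Sp(A)) ≤ ‖(A - λ)⁻¹‖⁻¹ ≤ ‖v‖⁻¹`.
-/

open scoped RealInnerProductSpace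

theorem IsSelfAdjoint.coe_units_inv {R : Type*} [Monoid R] [StarMul R] {u : Rˣ}
    (hu : IsSelfAdjoint (u : R)) : IsSelfAdjoint (↑u⁻¹ : R) := by
  have hstar : star u = u := Units.ext <| by rw [Units.coe_star, hu.star_eq]
  rw [IsSelfAdjoint, ← Units.coe_star_inv, hstar]

theorem spectrum.add_inv_mem_of_mem_inv {𝕜 A : Type*} [Field 𝕜] [Ring A] [Algebra 𝕜 A] {a : A}
    {r μ : 𝕜} {W : Aˣ} (hW : ↑W = a - algebraMap 𝕜 A r) (hμ : μ ∈ spectrum 𝕜 (↑W⁻¹ : A)) :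
    r + μ⁻¹ ∈ spectrum 𝕜 a := by
  have hμ0 : μ ≠ 0 := spectrum.ne_zero_of_mem_of_unit hμ
  have h := (spectrum.inv_mem_iff (r := Units.mk0 μ hμ0) (a := W⁻¹)).mp hμ
  simp only [inv_inv, Units.val_inv_eq_inv_val, Units.val_mk0, hW] at h
  have := (spectrum.add_mem_add_iff (s := r)).mpr h
  rwa [add_sub_cancel, add_comm] at this

section SelfAdjoint

variable {H : Type*} [NormedAddCommGroup H] [InnerProductSpace ℝ H] [CompleteSpace H]

theorem IsSelfAdjoint.exists_mem_spectrum_abs_eq_norm [Nontrivial H] {T : H →L[ℝ] H}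
    (hT : IsSelfAdjoint T) : ∃ μ ∈ spectrum ℝ T, |μ| = ‖T‖ := by
  -- Real spectra can be empty; here an empty spectrum would force `‖T‖ = 0`, i.e. `T = 0`.
  have hne : (spectrum ℝ T).Nonempty := by
    by_contra hempty
    rw [Set.not_nonempty_iff_eq_empty] at hempty
    have hr := T.spectralRadius_eq_nnnorm hT
    simp only [spectralRadius, hempty, Set.mem_empty_iff_false, iSup_false, iSup_bot] at hr
    rw [eq_comm, bot_eq_zero', ENNReal.coe_eq_zero, nnnorm_eq_zero] at hr
    simp [hr, spectrum.zero_eq] at hempty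
  obtain ⟨μ, hμ, hμT⟩ := spectrum.exists_nnnorm_eq_spectralRadius_of_nonempty hne
  refine ⟨μ, hμ, ?_⟩
  rw [T.spectralRadius_eq_nnnorm hT, ENNReal.coe_inj] at hμT
  simpa using congrArg NNReal.toReal hμT

theorem IsSelfAdjoint.infDist_spectrum_le_inv_norm_inv [Nontrivial H] {A : H →L[ℝ] H}
    (hA : IsSelfAdjoint A) {lam : ℝ} {W : (H →L[ℝ] H)ˣ} (hW : ↑W = A - algebraMap ℝ _ lam) :
    Metric.infDist lam (spectrum ℝ A) ≤ ‖(↑W⁻¹ : H →L[ℝ] H)‖⁻¹ := by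
  have hR : IsSelfAdjoint (↑W⁻¹ : H →L[ℝ] H) :=
    IsSelfAdjoint.coe_units_inv (hW ▸ hA.sub (.algebraMap _ (.all lam)))
  obtain ⟨μ, hμ, hμR⟩ := hR.exists_mem_spectrum_abs_eq_norm
  calc Metric.infDist lam (spectrum ℝ A) ≤ dist lam (lam + μ⁻¹) :=
        Metric.infDist_le_dist_of_mem (spectrum.add_inv_mem_of_mem_inv hW hμ)
    _ = ‖(↑W⁻¹ : H →L[ℝ] H)‖⁻¹ := by
        rw [Real.dist_eq, sub_add_cancel_left, abs_neg, abs_inv, hμR]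

theorem IsSelfAdjoint.infDist_spectrum_mul_norm_le {A : H →L[ℝ] H} (hA : IsSelfAdjoint A)
    (lam : ℝ) (x : H) : Metric.infDist lam (spectrum ℝ A) * ‖x‖ ≤ ‖A x - lam • x‖ := by
  rcases eq_or_ne x 0 with rfl | hx
  · simp
  have : Nontrivial H := ⟨⟨x, 0, hx⟩⟩
  by_cases hlam : lam ∈ spectrum ℝ A
  · simp [Metric.infDist_zero_of_mem hlam]
  obtain ⟨W, hW⟩ := (spectrum.notMem_iff.mp hlam).neg
  rw [neg_sub] at hW
  set R : H →L[ℝ] H := ↑W⁻¹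
  have hWx : (W : H →L[ℝ] H) x = A x - lam • x := by
    simp [hW, Algebra.algebraMap_eq_smul_one]
  have hx_le : ‖x‖ ≤ ‖R‖ * ‖A x - lam • x‖ := by
    calc ‖x‖ = ‖R ((W : H →L[ℝ] H) x)‖ := by
          rw [← mul_apply_eq_comp, Units.inv_mul, one_apply_eq_self]
      _ ≤ ‖R‖ * ‖A x - lam • x‖ := hWx ▸ R.le_opNorm _
  have hR0 : ‖R‖ ≠ 0 := norm_ne_zero_iff.mpr (Units.ne_zero W⁻¹)
  calc Metric.infDist lam (spectrum ℝ A) * ‖x‖ ≤ ‖R‖⁻¹ * (‖R‖ * ‖A x - lam • x‖) :=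
        mul_le_mul (hA.infDist_spectrum_le_inv_norm_inv hW) hx_le (norm_nonneg _) (by positivity)
    _ = ‖A x - lam • x‖ := inv_mul_cancel_left₀ hR0 _

end SelfAdjoint

theorem inv_le_of_one_le_mul_sqrt {t s p lam ε : ℝ} (ht : 0 < t) (hε1 : ε < 1) (hp : p ≤ t)
    (hs : s = p + (lam + 1) * t ^ 2) (hts : t ^ 2 ≤ s) (h : 1 ≤ ε * √s) :
    t⁻¹ ≤ |lam + 1| * ε / (1 - ε) := by
  set m := t⁻¹
  have hmt : t * m = 1 := mul_inv_cancel₀ ht.ne'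
  have hm0 : 0 < m := inv_pos.mpr ht
  have hε0 : 0 < ε := pos_of_mul_pos_left (one_pos.trans_le h) (Real.sqrt_nonneg s)
  have hεs : 1 ≤ ε ^ 2 * s := by
    have := pow_le_pow_left₀ zero_le_one h 2
    rwa [one_pow, mul_pow, Real.sq_sqrt ((sq_nonneg t).trans hts)] at this
  have hsX : s * m ^ 2 ≤ m + lam + 1 := by
    calc s * m ^ 2 = p * m ^ 2 + (lam + 1) * (t * m) ^ 2 := by rw [hs]; ring
      _ ≤ t * m ^ 2 + (lam + 1) := by rw [hmt, one_pow, mul_one]; gcongr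
      _ = m + lam + 1 := by rw [sq, ← mul_assoc, hmt, one_mul, add_assoc]
  have hX : 1 ≤ m + lam + 1 := by
    calc 1 = (t * m) ^ 2 := by rw [hmt, one_pow]
      _ ≤ s * m ^ 2 := by rw [mul_pow]; gcongr
      _ ≤ m + lam + 1 := hsX
  have hmX : m ≤ ε * (m + lam + 1) := by
    refine (pow_le_pow_iff_left₀ hm0.le (by positivity) two_ne_zero).mp ?_
    calc m ^ 2 ≤ ε ^ 2 * s * m ^ 2 := le_mul_of_one_le_left (sq_nonneg m) hεs
      _ ≤ ε ^ 2 * (m + lam + 1) := by rw [mul_assoc]; gcongr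
      _ ≤ ε ^ 2 * (m + lam + 1) ^ 2 := by gcongr; nlinarith
      _ = (ε * (m + lam + 1)) ^ 2 := by ring
  rw [le_div_iff₀ (sub_pos.mpr hε1)]
  nlinarith [le_abs_self (lam + 1)]

/-- quasimode-to-spectrum distance estimate for a nonnegative self-adjoint
operator with quadratic form `𝔞(u,v) = ⟪Au, v⟫`. -/
theorem stmt_11 {H : Type*} [NormedAddCommGroup H] [InnerProductSpace ℝ H] [CompleteSpace H]
    (A : H →L[ℝ] H) (hA : IsSelfAdjoint A)
    (hA_nonneg : ∀ x : H, 0 ≤ (inner ℝ (A x) x : ℝ))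
    (u : H) (hu : ‖u‖ = 1) (lam ε : ℝ) (hε0 : 0 < ε) (hε1 : ε < 1)
    (hquasi : ∀ v : H, |(inner ℝ (A u) v : ℝ) - lam * (inner ℝ u v : ℝ)| ≤
      ε * Real.sqrt ((inner ℝ (A v) v : ℝ) + ‖v‖ ^ 2)) :
    Metric.infDist lam (spectrum ℝ A) ≤ |lam + 1| * ε / (1 - ε) := by
  by_cases hlam : lam ∈ spectrum ℝ A
  · rw [Metric.infDist_zero_of_mem hlam]
    have : 0 < 1 - ε := sub_pos.mpr hε1
    positivity
  obtain ⟨v, hv⟩ := (ContinuousLinearMap.isUnit_iff_bijective.mp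
    (spectrum.notMem_iff.mp hlam).neg).2 u
  replace hv : A v - lam • v = u := by
    simpa [Algebra.algebraMap_eq_smul_one] using hv
  have hv0 : v ≠ 0 := by
    rintro rfl
    simp [← hv] at hu
  have hpair : ⟪A u, v⟫ - lam * ⟪u, v⟫ = 1 := by
    have hsym : ⟪A u, v⟫ = ⟪u, A v⟫ := hA.isSymmetric u v
    rw [hsym, ← real_inner_smul_right, ← inner_sub_right, hv, real_inner_self_eq_norm_sq, hu,
      one_pow]
  have hAv : ⟪A v, v⟫ = ⟪u, v⟫ + lam * ‖v‖ ^ 2 := by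
    rw [← hv, inner_sub_left, real_inner_smul_left, real_inner_self_eq_norm_sq]
    ring
  have hdist : Metric.infDist lam (spectrum ℝ A) ≤ ‖v‖⁻¹ := by
    have := hA.infDist_spectrum_mul_norm_le lam v
    rwa [hv, hu, ← le_div_iff₀ (norm_pos_iff.mpr hv0), one_div] at this
  refine hdist.trans (inv_le_of_one_le_mul_sqrt (s := ⟪A v, v⟫ + ‖v‖ ^ 2) (p := ⟪u, v⟫)
    (norm_pos_iff.mpr hv0) hε1 ?_ ?_ ?_ ?_)
  · simpa [hu] using real_inner_le_norm u v
  · rw [hAv]; ring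
  · exact le_add_of_nonneg_left (hA_nonneg v)
  · simpa [hpair] using hquasi v
end

section
/- Let A_ε and A be self-adjoint operators (on possibly varying Hilbert spaces linked by two-scale convergence) such that A_ε converges to A in the strong two-scale resolvent sense: whenever f_ε two-scale converges strongly to f in the range space, (A_ε + I)^{-1} f_ε two-scale converges strongly to (A + I)^{-1} f. Then every λ ∈ Sp(A) is a limit of points λ_ε ∈ Sp(A_ε), i.e. Sp(A) ⊂ lim_{ε→0} Sp(A_ε). -/
/-!
Put `R = (A + 1)⁻¹` and `μ = (λ + 1)⁻¹`, so that `λ ∈ Sp(A)` gives `μ ∈ Sp(R)`. As `R` is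
self-adjoint, `μ` has unit almost-eigenvectors `u` (Weyl's criterion). A two-scale approximation
`fε` of `u` is, by the strong two-scale resolvent convergence and the continuity of norms, an
almost-eigenvector of `Rε` at `μ` for small `ε`. For a self-adjoint `T` the spectral radius of
`(T - μ)⁻¹` is its norm, so `‖(T - μ) x‖ < c ‖x‖` forces a point of `Sp(T)` within `c` of `μ`.
This gives `ν ∈ Sp(Rε)` close to `μ`, and then `ν⁻¹ - 1 ∈ Sp(Aε)` is close to `λ`.
-/

open Filter Topology

theorem spectrum.inv_mem_of_mem_inv {𝕜 A : Type*} [Field 𝕜] [Ring A] [Algebra 𝕜 A] {a : Aˣ}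
    {k : 𝕜} (hk : k ∈ spectrum 𝕜 (↑a⁻¹ : A)) : k⁻¹ ∈ spectrum 𝕜 (a : A) := by
  simpa using (spectrum.inv_mem_iff (r := Units.mk0 k (spectrum.ne_zero_of_mem_of_unit hk))
    (a := a⁻¹)).mp hk

theorem IsSelfAdjoint.of_mul_eq_one {R : Type*} [Monoid R] [StarMul R] {a r : R}
    (ha : IsSelfAdjoint a) (h : a * r = 1) : IsSelfAdjoint r :=
  left_inv_eq_right_inv (by rw [← ha.star_eq, ← star_mul, h, star_one]) h

section Resolvent

variable {𝕜 A : Type*} [Field 𝕜] [Ring A] [Algebra 𝕜 A] {a r : A}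

theorem spectrum.inv_add_one_mem_of_mul_eq_one (h₁ : r * (a + 1) = 1) (h₂ : (a + 1) * r = 1)
    {k : 𝕜} (hk : k ∈ spectrum 𝕜 a) : (k + 1)⁻¹ ∈ spectrum 𝕜 r := by
  let u : Aˣ := ⟨a + 1, r, h₂, h₁⟩
  have hk' : k + 1 ∈ spectrum 𝕜 (↑u⁻¹⁻¹ : A) := by
    rw [inv_inv]
    simpa [u, add_comm a] using spectrum.add_mem_add_iff (s := 1) |>.mpr hk
  exact spectrum.inv_mem_of_mem_inv hk'

theorem spectrum.inv_sub_one_mem_of_mul_eq_one (h₁ : r * (a + 1) = 1) (h₂ : (a + 1) * r = 1)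
    {k : 𝕜} (hk : k ∈ spectrum 𝕜 r) : k⁻¹ - 1 ∈ spectrum 𝕜 a := by
  let u : Aˣ := ⟨a + 1, r, h₂, h₁⟩
  have hk' : k⁻¹ ∈ spectrum 𝕜 (u : A) := spectrum.inv_mem_of_mem_inv (a := u) hk
  rw [← spectrum.add_mem_add_iff (s := 1)]
  simpa [u, add_comm a] using hk'

end Resolvent

namespace IsSelfAdjoint

section RCLike

variable {𝕜 E : Type*} [RCLike 𝕜] [NormedAddCommGroup E] [InnerProductSpace 𝕜 E]
  [CompleteSpace E] {T : E →L[𝕜] E}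

theorem isUnit_of_antilipschitz (hT : IsSelfAdjoint T) {K : NNReal}
    (hK : AntilipschitzWith K T) : IsUnit T := by
  rw [ContinuousLinearMap.isUnit_iff_bijective,
    ContinuousLinearMap.bijective_iff_dense_range_and_antilipschitz]
  refine ⟨?_, K, hK⟩
  rw [Submodule.topologicalClosure_eq_top_iff, ContinuousLinearMap.orthogonal_range, hT.adjoint_eq]
  exact LinearMap.ker_eq_bot.mpr hK.injective

theorem exists_mem_spectrum_norm_eq [Nontrivial E] (hT : IsSelfAdjoint T) :
    ∃ z ∈ spectrum 𝕜 T, ‖z‖ = ‖T‖ := by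
  have hne : (spectrum 𝕜 T).Nonempty := by
    by_contra hemp
    rw [Set.not_nonempty_iff_eq_empty] at hemp
    have h0 : ‖T‖₊ = 0 := by
      simpa [spectralRadius, hemp] using (T.spectralRadius_eq_nnnorm hT).symm
    rw [nnnorm_eq_zero] at h0
    simp [h0, spectrum.zero_eq] at hemp
  obtain ⟨z, hz, hzT⟩ := spectrum.exists_nnnorm_eq_spectralRadius_of_nonempty hne
  rw [T.spectralRadius_eq_nnnorm hT, ENNReal.coe_inj] at hzT
  exact ⟨z, hz, congrArg NNReal.toReal hzT⟩

end RCLike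

section Real

variable {E : Type*} [NormedAddCommGroup E] [InnerProductSpace ℝ E] [CompleteSpace E]
  {T : E →L[ℝ] E}

theorem exists_norm_eq_one_norm_sub_smul_lt (hT : IsSelfAdjoint T) {μ δ : ℝ}
    (hμ : μ ∈ spectrum ℝ T) (hδ : 0 < δ) : ∃ u : E, ‖u‖ = 1 ∧ ‖T u - μ • u‖ < δ := by
  by_contra! hbelow
  have hbound : ∀ x, δ * ‖x‖ ≤ ‖(T - algebraMap ℝ _ μ) x‖ := by
    intro x
    rcases eq_or_ne x 0 with rfl | hx
    · simp
    have hxpos : 0 < ‖x‖ := norm_pos_iff.mpr hx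
    have h := hbelow (‖x‖⁻¹ • x) (by simp [norm_smul, hxpos.ne'])
    rw [map_smul, smul_comm, ← smul_sub, norm_smul, norm_inv, norm_norm,
      ← div_eq_inv_mul, le_div_iff₀ hxpos] at h
    simpa [Algebra.algebraMap_eq_smul_one] using h
  obtain ⟨K, hK⟩ := antilipschitzWith_iff_exists_mul_le_norm.mpr ⟨δ, hδ, hbound⟩
  have hunit := (hT.sub (IsSelfAdjoint.algebraMap _ (.all μ))).isUnit_of_antilipschitz hK
  exact spectrum.mem_iff.mp hμ (IsUnit.sub_iff.mp hunit)

theorem exists_mem_spectrum_dist_lt (hT : IsSelfAdjoint T) {μ c : ℝ} {x : E} (hx : x ≠ 0)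
    (h : ‖T x - μ • x‖ < c * ‖x‖) : ∃ ν ∈ spectrum ℝ T, dist ν μ < c := by
  have hxpos : 0 < ‖x‖ := norm_pos_iff.mpr hx
  by_cases hμ : μ ∈ spectrum ℝ T
  · refine ⟨μ, hμ, ?_⟩
    rw [dist_self]
    exact pos_of_mul_pos_left ((norm_nonneg _).trans_lt h) hxpos.le
  obtain ⟨w, hw⟩ := spectrum.notMem_iff.mp hμ
  have : Nontrivial E := ⟨⟨x, 0, hx⟩⟩
  have hwsa : IsSelfAdjoint (w : E →L[ℝ] E) :=
    hw ▸ (IsSelfAdjoint.algebraMap _ (.all μ)).sub hT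
  -- `‖(μ - T)⁻¹‖ = |z|` for a spectral point `z` of `(μ - T)⁻¹`, and `μ - z⁻¹ ∈ spectrum ℝ T`
  obtain ⟨z, hz, hzV⟩ := (Ring.inverse_unit w ▸ hwsa.ringInverse).exists_mem_spectrum_norm_eq
  have hz0 : z ≠ 0 := spectrum.ne_zero_of_mem_of_unit hz
  have hx_le : ‖x‖ ≤ ‖z‖ * ‖T x - μ • x‖ := by
    calc ‖x‖ = ‖(↑w⁻¹ : E →L[ℝ] E) ((w : E →L[ℝ] E) x)‖ := by
          rw [← mul_apply_eq_comp, Units.inv_mul, one_apply_eq_self]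
      _ ≤ ‖z‖ * ‖T x - μ • x‖ := by
          rw [hzV, hw, norm_sub_rev]
          exact (ContinuousLinearMap.le_opNorm _ _).trans_eq
            (by simp [Algebra.algebraMap_eq_smul_one])
  refine ⟨μ - z⁻¹, ?_, ?_⟩
  · have hzinv := spectrum.inv_mem_of_mem_inv hz
    rw [hw, ← spectrum.singleton_sub_eq] at hzinv
    obtain ⟨_, rfl, ν, hν, hsub⟩ := hzinv
    rw [← hsub]
    simpa using hν
  · rw [Real.dist_eq, sub_sub_cancel_left, abs_neg, abs_inv, ← Real.norm_eq_abs,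
      inv_lt_iff_one_lt_mul₀ (norm_pos_iff.mpr hz0)]
    nlinarith [mul_lt_mul_of_pos_left h (norm_pos_iff.mpr hz0)]

end Real

end IsSelfAdjoint

theorem exists_seq_tendsto_of_frequently_dist_lt {X : Type*} [PseudoMetricSpace X]
    {S : ℝ → Set X} {l : X} (h : ∀ δ > 0, ∃ᶠ ε in 𝓝[>] 0, ∃ x ∈ S ε, dist x l < δ) :
    ∃ εs : ℕ → ℝ, ∃ xs : ℕ → X, (∀ m, 0 < εs m) ∧ Tendsto εs atTop (𝓝 0) ∧
      (∀ m, xs m ∈ S (εs m)) ∧ Tendsto xs atTop (𝓝 l) := by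
  have hm (m : ℕ) :
      ∃ ε ∈ Set.Ioo 0 (1 / ((m : ℝ) + 1)), ∃ x ∈ S ε, dist x l < 1 / ((m : ℝ) + 1) :=
    ((h _ (by positivity)).and_eventually (Ioo_mem_nhdsGT (by positivity))).exists.imp
      fun _ h => ⟨h.2, h.1⟩
  choose εs hεs xs hxs hdist using hm
  refine ⟨εs, xs, fun m => (hεs m).1, ?_, hxs, ?_⟩
  · exact squeeze_zero (fun m => (hεs m).1.le) (fun m => (hεs m).2.le)
      tendsto_one_div_add_atTop_nhds_zero_nat
  · exact tendsto_iff_dist_tendsto_zero.mpr <| squeeze_zero (fun _ => dist_nonneg)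
      (fun m => (hdist m).le) tendsto_one_div_add_atTop_nhds_zero_nat

theorem eventually_exists_mem_spectrum_dist_lt {E ι : Type*} [NormedAddCommGroup E]
    [InnerProductSpace ℝ E] [CompleteSpace E] {l : Filter ι} {T : ι → E →L[ℝ] E}
    (hT : ∀ᶠ i in l, IsSelfAdjoint (T i)) {f : ι → E} {μ κ a b : ℝ}
    (hf : Tendsto (fun i => ‖f i‖) l (𝓝 a))
    (hTf : Tendsto (fun i => ‖T i (f i) - μ • f i‖) l (𝓝 b)) (hb : b < κ * a) :
    ∀ᶠ i in l, ∃ ν ∈ spectrum ℝ (T i), dist ν μ < κ := by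
  have hlt : ∀ᶠ i in l, ‖T i (f i) - μ • f i‖ < κ * ‖f i‖ :=
    hTf.eventually_lt (hf.const_mul κ) hb
  filter_upwards [hT, hlt] with i hTi hi
  have hfi : f i ≠ 0 := by
    rintro hfi
    simp [hfi] at hi
  exact hTi.exists_mem_spectrum_dist_lt hfi hi

/-- strong two-scale resolvent convergence implies spectral inclusion:
every point of the spectrum of the limit operator `A` is a limit of spectral points of `Aε`.
The two-scale convergence relation `TS` links families in `H` to elements of `H₀`; it is
assumed to be compatible with norms and linear combinations, every limit is attained, and
the resolvents `Rε = (Aε + I)⁻¹`, `R = (A + I)⁻¹` intertwine with `TS`. -/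
theorem stmt_17 {H H₀ : Type*}
    [NormedAddCommGroup H] [InnerProductSpace ℝ H] [CompleteSpace H]
    [NormedAddCommGroup H₀] [InnerProductSpace ℝ H₀] [CompleteSpace H₀]
    (Aε : ℝ → H →L[ℝ] H) (A : H₀ →L[ℝ] H₀)
    (hAε_sa : ∀ ε > (0:ℝ), IsSelfAdjoint (Aε ε)) (hA_sa : IsSelfAdjoint A)
    (Rε : ℝ → H →L[ℝ] H) (R : H₀ →L[ℝ] H₀)
    (hRε : ∀ ε > (0:ℝ), ∀ x : H, Rε ε (Aε ε x + x) = x ∧ Aε ε (Rε ε x) + Rε ε x = x)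
    (hR : ∀ x : H₀, R (A x + x) = x ∧ A (R x) + R x = x)
    (TS : (ℝ → H) → H₀ → Prop)
    (hTS_exists : ∀ f : H₀, ∃ fε : ℝ → H, TS fε f)
    (hTS_norm : ∀ (fε : ℝ → H) (f : H₀), TS fε f →
      Tendsto (fun ε => ‖fε ε‖) (nhdsWithin 0 (Set.Ioi 0)) (nhds ‖f‖))
    (hTS_lin : ∀ (fε : ℝ → H) (f : H₀) (gε : ℝ → H) (g : H₀) (c : ℝ),
      TS fε f → TS gε g → TS (fun ε => fε ε + c • gε ε) (f + c • g))
    (hres : ∀ (fε : ℝ → H) (f : H₀), TS fε f → TS (fun ε => Rε ε (fε ε)) (R f)) :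
    ∀ lam ∈ spectrum ℝ A, ∃ εs lams : ℕ → ℝ,
      (∀ m, 0 < εs m) ∧ Tendsto εs atTop (nhds 0) ∧
      (∀ m, lams m ∈ spectrum ℝ (Aε (εs m))) ∧
      Tendsto lams atTop (nhds lam) := by
  intro lam hlam
  have hRεinv (ε : ℝ) (hε : 0 < ε) : Rε ε * (Aε ε + 1) = 1 ∧ (Aε ε + 1) * Rε ε = 1 :=
    ⟨ContinuousLinearMap.ext fun x => (hRε ε hε x).1,
      ContinuousLinearMap.ext fun x => (hRε ε hε x).2⟩
  have hRinv : R * (A + 1) = 1 ∧ (A + 1) * R = 1 :=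
    ⟨ContinuousLinearMap.ext fun x => (hR x).1, ContinuousLinearMap.ext fun x => (hR x).2⟩
  have hRsa : IsSelfAdjoint R := (hA_sa.add (.one _)).of_mul_eq_one hRinv.2
  set μ := (lam + 1)⁻¹
  have hμ : μ ∈ spectrum ℝ R := spectrum.inv_add_one_mem_of_mul_eq_one hRinv.1 hRinv.2 hlam
  have hnear (κ : ℝ) (hκ : 0 < κ) : ∀ᶠ ε in 𝓝[>] 0, ∃ ν ∈ spectrum ℝ (Rε ε), dist ν μ < κ := by
    obtain ⟨u, hu, huμ⟩ := hRsa.exists_norm_eq_one_norm_sub_smul_lt hμ hκ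
    obtain ⟨fε, hfε⟩ := hTS_exists u
    refine eventually_exists_mem_spectrum_dist_lt
      (eventually_mem_nhdsWithin.mono fun ε hε => ((hAε_sa ε hε).add (.one _)).of_mul_eq_one
        (hRεinv ε hε).2) (hTS_norm _ _ hfε) ?_ (by rwa [hu, mul_one])
    have h := hTS_norm _ _ (hTS_lin _ _ _ _ (-μ) (hres _ _ hfε) hfε)
    simp only [neg_smul, ← sub_eq_add_neg] at h
    exact h
  obtain ⟨εs, νs, hεs_pos, hεs_lim, hνs_mem, hνs_lim⟩ :=
    exists_seq_tendsto_of_frequently_dist_lt fun κ hκ => (hnear κ hκ).frequently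
  refine ⟨εs, fun m => (νs m)⁻¹ - 1, hεs_pos, hεs_lim, fun m => ?_, ?_⟩
  · obtain ⟨h₁, h₂⟩ := hRεinv _ (hεs_pos m)
    exact spectrum.inv_sub_one_mem_of_mul_eq_one h₁ h₂ (hνs_mem m)
  · have hμ0 : μ ≠ 0 := spectrum.ne_zero_of_mem_of_unit (a := ⟨R, A + 1, hRinv.1, hRinv.2⟩) hμ
    simpa [μ] using (hνs_lim.inv₀ hμ0).sub_const 1
end
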